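/- arXiv:1204.2353 — 2 statements merged into one kernel-verified Lean document; each statement's English description precedes it below -/
import Mathlib

section
/- With orthonormal design and weights wᵢ = 1/|cᵢ| where c = X^T y, and assuming |c₁| ≥ ⋯ ≥ |c_{p₀}| > |c_{p₀+1}| ≥ ⋯ ≥ |c_p| with all cᵢ ≠ 0, any λ ∈ (|c_{p₀+1}|, |c_{p₀}|) yields the coordinate-wise LAGS minimizer β̂ᵢ = cᵢ for i ≤ p₀ and β̂ᵢ = 0 for i > p₀, coinciding with the ℓ₀ hard-thresholding solution with threshold λ. -/
theorem stmt_14 (p p₀ : ℕ) (hp₀ : 0 < p₀) (hp : p₀ < p)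
    (c : Fin p → ℝ) (hnz : ∀ i, c i ≠ 0)
    (hmono : ∀ i j : Fin p, i ≤ j → |c j| ≤ |c i|)
    (lam : ℝ)
    (hlam₁ : |c ⟨p₀, hp⟩| < lam)
    (hlam₂ : lam < |c ⟨p₀ - 1, by omega⟩|)
    (βhat : Fin p → ℝ)
    (hβhat : βhat = fun i : Fin p => if (i : ℕ) < p₀ then c i else 0) :
    (∀ i : Fin p, ∀ β : ℝ,
        |c i - βhat i| + lam * (1 / |c i|) * |βhat i| ≤
          |c i - β| + lam * (1 / |c i|) * |β|) ∧
      (∀ i : Fin p, βhat i = if lam ≤ |c i| then c i else 0) := by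
  have hlampos : 0 < lam := lt_of_le_of_lt (abs_nonneg _) hlam₁
  have key : ∀ i : Fin p, ((i : ℕ) < p₀ → lam < |c i|) ∧ (p₀ ≤ (i : ℕ) → |c i| < lam) := by
    intro i
    constructor
    · intro hi
      exact lt_of_lt_of_le hlam₂ (hmono i ⟨p₀ - 1, by omega⟩ (by simp [Fin.le_def]; omega))
    · intro hi
      exact lt_of_le_of_lt (hmono ⟨p₀, hp⟩ i (by simp [Fin.le_def]; omega)) hlam₁
  constructor
  · intro i β
    have hci : 0 < |c i| := abs_pos.mpr (hnz i)
    by_cases hi : (i : ℕ) < p₀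
    · have hlt := (key i).1 hi
      simp only [hβhat, if_pos hi]
      have h1 : |c i - c i| = 0 := by simp
      rw [h1]
      have htri : |c i| ≤ |c i - β| + |β| := by
        have h := abs_add_le (c i - β) β
        simpa using h
      have hfrac : lam * (1 / |c i|) ≤ 1 := by
        rw [mul_one_div, div_le_one hci]; linarith
      have hfrac0 : 0 ≤ lam * (1 / |c i|) := by positivity
      have heq : lam * (1 / |c i|) * |c i| = lam := by field_simp
      rw [zero_add]
      nlinarith [mul_le_mul_of_nonneg_left htri hfrac0,
        mul_le_mul_of_nonneg_right hfrac (abs_nonneg (c i - β))]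
    · have hlt := (key i).2 (by omega)
      simp only [hβhat, if_neg hi]
      have hfrac : 1 ≤ lam * (1 / |c i|) := by
        rw [mul_one_div, le_div_iff₀ hci]; linarith
      have htri : |c i| ≤ |c i - β| + |β| := by
        have h := abs_add_le (c i - β) β
        simpa using h
      simp only [sub_zero, abs_zero, mul_zero, add_zero]
      nlinarith [abs_nonneg β]
  · intro i
    by_cases hi : (i : ℕ) < p₀
    · have hlt := (key i).1 hi
      simp [hβhat, hi, le_of_lt hlt]
    · have hlt := (key i).2 (by omega)
      simp [hβhat, hi, not_le.mpr hlt]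
end

section
/- Let β̂ minimize l(β) = (1/n)‖X^TX(β_OLS − β)‖₁ + λ Σᵢ wᵢ|βᵢ| with λ, wᵢ > 0, where C_n = (1/n)X^TX. If for some index i the inequality λ wᵢ > ‖C_n‖_∞ holds, then β̂ᵢ = 0. -/
open Matrix

/-- The ℓ∞→ℓ∞ operator norm of a matrix: maximum absolute row sum. -/
noncomputable def matInfNorm {m k : ℕ} (A : Matrix (Fin m) (Fin k) ℝ) : ℝ :=
  ⨆ i, ∑ j, |A i j|

theorem stmt_19 (n p : ℕ) (hn : 0 < n)
    (X : Matrix (Fin n) (Fin p) ℝ) (βOLS : Fin p → ℝ)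
    (lam : ℝ) (hlam : 0 < lam) (w : Fin p → ℝ) (hw : ∀ i, 0 < w i)
    (Cn : Matrix (Fin p) (Fin p) ℝ) (hCn : Cn = (1 / (n : ℝ)) • (Xᵀ * X))
    (l : (Fin p → ℝ) → ℝ)
    (hl : ∀ β, l β = (1 / n) * (∑ i, |(Xᵀ * X).mulVec (βOLS - β) i|) +
      lam * ∑ i, w i * |β i|)
    (βhat : Fin p → ℝ) (hmin : ∀ β, l βhat ≤ l β)
    (i : Fin p) (hi : matInfNorm Cn < lam * w i) :
    βhat i = 0 := by
  set M := Xᵀ * X with hM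
  set β' : Fin p → ℝ := Function.update βhat i 0 with hβ'
  have hninv : (0:ℝ) ≤ 1 / n := by positivity
  -- vector identity
  have hvec : βOLS - β' = (βOLS - βhat) + Pi.single i (βhat i) := by
    funext k
    by_cases h : k = i
    · subst h; simp [hβ']
    · simp [hβ', Function.update_of_ne h, Pi.single_eq_of_ne h]
  have hmv : ∀ j, M.mulVec (βOLS - β') j = M.mulVec (βOLS - βhat) j + M j i * βhat i := by
    intro j
    rw [hvec, Matrix.mulVec_add]
    simp [Matrix.mulVec_single, mul_comm]
  -- first-term bound
  have hA : ∑ j, |M.mulVec (βOLS - β') j| ≤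
      (∑ j, |M.mulVec (βOLS - βhat) j|) + ∑ j, |M j i| * |βhat i| := by
    rw [← Finset.sum_add_distrib]
    apply Finset.sum_le_sum
    intro j _
    rw [hmv j]
    exact (abs_add_le _ _).trans (by rw [abs_mul])
  -- penalty identity
  have hB : ∑ k, w k * |β' k| = (∑ k, w k * |βhat k|) - w i * |βhat i| := by
    have hpt : ∀ k : Fin p, w k * |β' k| =
        w k * |βhat k| - (if k = i then w i * |βhat i| else 0) := by
      intro k
      by_cases h : k = i
      · subst h; simp [hβ']
      · simp [hβ', Function.update_of_ne h, h]
    rw [Finset.sum_congr rfl (fun k _ => hpt k), Finset.sum_sub_distrib,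
      Finset.sum_ite_eq' Finset.univ i (fun _ => w i * |βhat i|)]
    simp
  -- column sum bound via symmetry and sup
  have hsymm : ∀ j, M j i = M i j := by
    intro j
    simp [hM, Matrix.mul_apply, Matrix.transpose_apply, mul_comm]
  have hS : (1 / n) * ∑ j, |M j i| ≤ matInfNorm Cn := by
    have h1 : (1 / (n:ℝ)) * ∑ j, |M j i| = ∑ j, |Cn i j| := by
      rw [Finset.mul_sum]
      refine Finset.sum_congr rfl fun j _ => ?_
      rw [hCn]
      simp only [Matrix.smul_apply, smul_eq_mul, abs_mul, abs_of_nonneg hninv, hsymm j]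
    rw [h1, matInfNorm]
    exact le_ciSup (f := fun r => ∑ j, |Cn r j|) (Set.Finite.bddAbove (Set.finite_range _)) i
  -- use minimality
  have key := hmin β'
  rw [hl, hl] at key
  have h2 : (1 / (n:ℝ)) * (∑ j, |M.mulVec (βOLS - β') j|) ≤
      (1 / n) * (∑ j, |M.mulVec (βOLS - βhat) j|) + (1 / n) * ∑ j, |M j i| * |βhat i| := by
    rw [← mul_add]
    exact mul_le_mul_of_nonneg_left hA hninv
  have habs : |βhat i| = 0 := by
    have hSum : ∑ j, |M j i| * |βhat i| = (∑ j, |M j i|) * |βhat i| := by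
      rw [Finset.sum_mul]
    have h3 : lam * (w i * |βhat i|) ≤ (1 / n) * ((∑ j, |M j i|) * |βhat i|) := by
      rw [hB] at key
      nlinarith [key, h2, hSum]
    have h4 : (0:ℝ) ≤ |βhat i| := abs_nonneg _
    nlinarith [hS, hi, h3, h4]
  exact abs_eq_zero.mp habs
end
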